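/- Let (X, 𝔅, μ) be a probability space with a measure-preserving ℝ^d-action φ, let f ∈ L²(X,μ), and let σ_f be a spectral measure of f. Suppose there exist constants C > 0 and 0 ≤ α < d such that |∫_{C_R} f(φ_s x) ds| ≤ C R^α for every R ≥ 2 and μ-almost every x ∈ X. Then for every 0 < r ≤ 1/8: σ_f(C^0_r) ≤ (π²/16)^d C² (4r)^{2(d−α)}. -/

import Mathlib

open MeasureTheory Real Complex Finset

/-- `e[x] = e^{2πix}`. -/
noncomputable def ee (x : ℝ) : ℂ := Complex.exp (2 * Real.pi * Complex.I * x)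

/-- The pairing `x · y = ∑ i, x i * y i` on `ℝ^d`. -/
noncomputable def dotR {d : ℕ} (x y : Fin d → ℝ) : ℝ := ∑ i, x i * y i

/-- The cube `C^ω_r = ∏_i [ω_i − r, ω_i + r]` in `ℝ^d`; `C_R = cube 0 R`. -/
def cube {d : ℕ} (ω : Fin d → ℝ) (r : ℝ) : Set (Fin d → ℝ) := {x | ∀ i, |x i - ω i| ≤ r}

lemma continuous_ee : Continuous ee := by
  unfold ee; fun_prop

lemma norm_ee (x : ℝ) : ‖ee x‖ = 1 := by
  simp only [ee, Complex.norm_exp]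
  norm_num [Complex.mul_re, Complex.mul_im]

lemma ee_add (a b : ℝ) : ee (a + b) = ee a * ee b := by
  simp only [ee, ← Complex.exp_add]
  push_cast; ring_nf

lemma conj_ee (a : ℝ) : (starRingEnd ℂ) (ee a) = ee (-a) := by
  simp only [ee, ← Complex.exp_conj]
  push_cast
  congr 1
  simp [Complex.ext_iff]

lemma ee_sum {ι : Type*} (t : Finset ι) (a : ι → ℝ) :
    ee (∑ i ∈ t, a i) = ∏ i ∈ t, ee (a i) := by
  simp only [ee, ← Complex.exp_sum]
  congr 1
  push_cast [Finset.mul_sum]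
  rfl

lemma cube_eq_pi {d : ℕ} (ω : Fin d → ℝ) (r : ℝ) :
    cube ω r = Set.pi Set.univ (fun i => Set.Icc (ω i - r) (ω i + r)) := by
  ext x
  simp only [cube, Set.mem_setOf_eq, Set.mem_pi, Set.mem_univ, forall_true_left,
    Set.mem_Icc, abs_le]
  constructor <;> intro h i <;> have := h i <;> constructor <;> linarith [this.1, this.2]

lemma measurableSet_cube {d : ℕ} (ω : Fin d → ℝ) (r : ℝ) : MeasurableSet (cube ω r) := by
  rw [cube_eq_pi]
  exact MeasurableSet.univ_pi fun i => measurableSet_Icc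

lemma volume_cube {d : ℕ} (ω : Fin d → ℝ) {r : ℝ} (hr : 0 ≤ r) :
    volume (cube ω r) = ENNReal.ofReal (2 * r) ^ d := by
  rw [cube_eq_pi, volume_pi_pi]
  simp only [Real.volume_Icc]
  have : ∀ i : Fin d, ω i + r - (ω i - r) = 2 * r := fun i => by ring
  simp only [this]
  rw [Finset.prod_const, Finset.card_univ, Fintype.card_fin]

lemma K1_eq {R ω : ℝ} (hR : 0 < R) (hω : ω ≠ 0) :
    (∫ t in Set.Icc (-R) R, ee (-(ω * t))) =
      ((Real.sin (2 * Real.pi * ω * R) / (Real.pi * ω) : ℝ) : ℂ) := by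
  have hc : (-(2 * Real.pi * Complex.I * ω) : ℂ) ≠ 0 := by
    simp [Complex.ext_iff, Real.pi_ne_zero, hω]
  have h1 : (∫ t in Set.Icc (-R) R, ee (-(ω * t)))
      = ∫ t in (-R)..R, Complex.exp ((-(2 * Real.pi * Complex.I * ω)) * t) := by
    rw [MeasureTheory.integral_Icc_eq_integral_Ioc,
      ← intervalIntegral.integral_of_le (by linarith : -R ≤ R)]
    congr 1
    ext t
    unfold ee
    congr 1
    push_cast
    ring
  rw [h1, integral_exp_mul_complex hc]
  have h2 : Complex.exp (-(2 * Real.pi * Complex.I * ω) * R)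
      - Complex.exp (-(2 * Real.pi * Complex.I * ω) * ((-R : ℝ) : ℂ))
      = -2 * Complex.I * Complex.sin (2 * Real.pi * ω * R) := by
    rw [Complex.sin]
    rw [show (-(2 * Real.pi * Complex.I * ω) * R : ℂ)
        = (-(2 * Real.pi * ω * R : ℂ)) * Complex.I by push_cast; ring,
      show (-(2 * Real.pi * Complex.I * ω) * ((-R : ℝ) : ℂ) : ℂ)
        = (2 * Real.pi * ω * R : ℂ) * Complex.I by push_cast; ring]
    linear_combination (Complex.exp ((-(2 * Real.pi * ω * R : ℂ)) * Complex.I)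
      - Complex.exp ((2 * Real.pi * ω * R : ℂ) * Complex.I)) * Complex.I_sq
  rw [h2, Complex.ofReal_div, Complex.ofReal_sin]
  have hπω : ((Real.pi * ω : ℝ) : ℂ) ≠ 0 := by
    simp [Real.pi_ne_zero, hω]
  push_cast at hπω ⊢
  rw [div_eq_div_iff hc hπω]
  ring_nf

lemma sin_div_ge {θ : ℝ} (h0 : 0 < θ) (h2 : θ ≤ Real.pi / 2) :
    2 / Real.pi ≤ Real.sin θ / θ := by
  rw [le_div_iff₀ h0]
  exact Real.mul_le_sin h0.le h2

lemma K1_lower {R ω : ℝ} (hR : 0 < R) (hω : |ω| ≤ 1 / (4 * R)) :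
    ∃ v : ℝ, (∫ t in Set.Icc (-R) R, ee (-(ω * t))) = (v : ℂ) ∧ 4 * R / Real.pi ≤ v := by
  rcases eq_or_ne ω 0 with h0 | h0
  · refine ⟨2 * R, ?_, ?_⟩
    · subst h0
      simp only [zero_mul, neg_zero]
      rw [setIntegral_const]
      simp only [measureReal_def, Real.volume_Icc]
      rw [show R - (-R) = 2 * R by ring]
      rw [ENNReal.toReal_ofReal (by linarith)]
      simp [ee, Complex.ofReal_mul]
    · rw [div_le_iff₀ Real.pi_pos]
      nlinarith [Real.pi_gt_three]
  · refine ⟨Real.sin (2 * Real.pi * ω * R) / (Real.pi * ω), K1_eq hR h0, ?_⟩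
    -- WLOG ω > 0 I handle both signs directly
    have key : ∀ u : ℝ, 0 < u → u ≤ 1 / (4 * R) →
        4 * R / Real.pi ≤ Real.sin (2 * Real.pi * u * R) / (Real.pi * u) := by
      intro u hu hu4
      have hθ0 : 0 < 2 * Real.pi * u * R := by positivity
      have hu1 : u * (4 * R) ≤ 1 := (le_div_iff₀ (by positivity)).mp hu4
      have hθ2 : 2 * Real.pi * u * R ≤ Real.pi / 2 := by nlinarith [Real.pi_pos]
      have hkey := sin_div_ge hθ0 hθ2
      rw [le_div_iff₀ hθ0] at hkey
      have h4 : 2 / Real.pi * (2 * Real.pi * u * R) = 4 * u * R := by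
        field_simp; ring
      rw [h4] at hkey
      rw [le_div_iff₀ (by positivity : (0:ℝ) < Real.pi * u)]
      have h5 : 4 * R / Real.pi * (Real.pi * u) = 4 * u * R := by
        field_simp
      rw [h5]
      exact hkey
    rcases lt_or_gt_of_ne h0 with hneg | hpos
    · have h1 : Real.sin (2 * Real.pi * ω * R) / (Real.pi * ω)
          = Real.sin (2 * Real.pi * (-ω) * R) / (Real.pi * (-ω)) := by
        rw [show 2 * Real.pi * (-ω) * R = -(2 * Real.pi * ω * R) by ring, Real.sin_neg]
        field_simp
      rw [h1]
      exact key (-ω) (by linarith) (by rw [abs_of_neg hneg] at hω; exact hω)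
    · exact key ω hpos (by rw [abs_of_pos hpos] at hω; exact hω)

lemma K_eq_prod {d : ℕ} (R : ℝ) (ω : Fin d → ℝ) :
    (∫ s in cube 0 R, ee (-(dotR ω s)))
      = ∏ i, ∫ t in Set.Icc (-R) R, ee (-(ω i * t)) := by
  rw [← MeasureTheory.integral_indicator (measurableSet_cube 0 R)]
  have hpt : (cube (0 : Fin d → ℝ) R).indicator (fun s => ee (-(dotR ω s)))
      = fun s : Fin d → ℝ =>
          ∏ i, (Set.Icc (-R) R).indicator (fun t => ee (-(ω i * t))) (s i) := by
    funext s
    by_cases hs : s ∈ cube (0 : Fin d → ℝ) R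
    · rw [Set.indicator_of_mem hs]
      have hmem : ∀ i, s i ∈ Set.Icc (-R) R := by
        intro i
        have := hs i
        rw [Pi.zero_apply, sub_zero] at this
        exact Set.mem_Icc.mpr (abs_le.mp this)
      rw [Finset.prod_congr rfl fun i _ => Set.indicator_of_mem (hmem i) _]
      rw [show (-(dotR ω s)) = ∑ i, -(ω i * s i) by simp [dotR, Finset.sum_neg_distrib]]
      exact ee_sum _ _
    · rw [Set.indicator_of_notMem hs]
      obtain ⟨i, hi⟩ : ∃ i, ¬ |s i - 0| ≤ R := by
        by_contra h
        push_neg at h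
        exact hs fun i => h i
      refine (Finset.prod_eq_zero (Finset.mem_univ i) ?_).symm
      rw [sub_zero] at hi
      rw [Set.indicator_of_notMem]
      simp only [Set.mem_Icc, ← abs_le]
      exact hi
  rw [hpt]
  rw [MeasureTheory.integral_fintype_prod_volume_eq_prod (ι := Fin d)
    (f := fun i t => (Set.Icc (-R) R).indicator (fun u => ee (-(ω i * u))) t)]
  exact Finset.prod_congr rfl fun i _ =>
    (MeasureTheory.integral_indicator measurableSet_Icc)

lemma integral_comp_bij {X : Type*} [MeasurableSpace X] {μ : Measure X}
    {T S : X → X} (hT : Measurable T) (hS : Measurable S)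
    (hST : ∀ x, S (T x) = x) (hTS : ∀ x, T (S x) = x)
    (hmp : MeasurePreserving T μ μ)
    {E : Type*} [NormedAddCommGroup E] [NormedSpace ℝ E] (G : X → E) :
    ∫ x, G (T x) ∂μ = ∫ x, G x ∂μ :=
  hmp.integral_comp (MeasurableEquiv.measurableEmbedding
    ⟨⟨T, S, hST, hTS⟩, hT, hS⟩) G

theorem core {d : ℕ}
    {X : Type*} [MeasurableSpace X] (μ : Measure X) [IsProbabilityMeasure μ]
    (φ : (Fin d → ℝ) → X → X)
    (hφmeas : Measurable fun p : (Fin d → ℝ) × X => φ p.1 p.2)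
    (hφ0 : φ 0 = id)
    (hφadd : ∀ s t : Fin d → ℝ, φ (s + t) = φ s ∘ φ t)
    (hφmp : ∀ s : Fin d → ℝ, MeasurePreserving (φ s) μ μ)
    (f : X → ℂ) (hf : MemLp f 2 μ) (hfm : StronglyMeasurable f)
    (σf : Measure (Fin d → ℝ)) [IsFiniteMeasure σf]
    (hspec : ∀ s : Fin d → ℝ,
      ∫ ω, ee (-(dotR ω s)) ∂σf = ∫ x, f (φ s x) * (starRingEnd ℂ) (f x) ∂μ)
    (C α : ℝ) (hC : 0 < C) (hα0 : 0 ≤ α) (hαd : α < d)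
    (hdev : ∀ R : ℝ, 2 ≤ R → ∀ᵐ x ∂μ,
      ‖∫ s in cube 0 R, f (φ s x)‖ ≤ C * R ^ α) :
    ∀ r : ℝ, 0 < r → r ≤ 1 / 8 →
      (σf (cube 0 r)).toReal
        ≤ (Real.pi ^ 2 / 16) ^ d * C ^ 2 * (4 * r) ^ (2 * ((d : ℝ) - α)) := by
  intro r hr hr8
  have hπ := Real.pi_pos
  set R : ℝ := 1 / (4 * r) with hRdef
  have hR0 : 0 < R := by positivity
  have hR2 : 2 ≤ R := by
    rw [hRdef, le_div_iff₀ (by positivity)]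
    linarith
  set ν : Measure (Fin d → ℝ) := volume.restrict (cube 0 R) with hνdef
  haveI hνfin : IsFiniteMeasure ν := by
    constructor
    rw [hνdef, Measure.restrict_apply_univ, volume_cube 0 (by linarith : (0:ℝ) ≤ R)]
    exact ENNReal.pow_lt_top ENNReal.ofReal_lt_top
  -- basic measurability of the flow maps
  have φme : ∀ t : Fin d → ℝ, Measurable (φ t) := fun t =>
    hφmeas.comp (measurable_const.prodMk measurable_id)
  have φinv : ∀ (t : Fin d → ℝ) (x : X), φ (-t) (φ t x) = x := by
    intro t x
    rw [← Function.comp_apply (f := φ (-t)), ← hφadd, neg_add_cancel, hφ0]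
    rfl
  have key : ∀ (t : Fin d → ℝ) (G : X → ℂ), ∫ x, G (φ t x) ∂μ = ∫ x, G x ∂μ := by
    intro t G
    exact integral_comp_bij (φme t) (φme (-t)) (φinv t)
      (fun x => by have := φinv (-t) x; rwa [neg_neg] at this) (hφmp t) G
  have keyR : ∀ (t : Fin d → ℝ) (G : X → ℝ), ∫ x, G (φ t x) ∂μ = ∫ x, G x ∂μ := by
    intro t G
    exact integral_comp_bij (φme t) (φme (-t)) (φinv t)
      (fun x => by have := φinv (-t) x; rwa [neg_neg] at this) (hφmp t) G
  set K : (Fin d → ℝ) → ℂ := fun ω => ∫ s, ee (-(dotR ω s)) ∂ν with hKdef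
  set g : X → ℂ := fun x => ∫ s, f (φ s x) ∂ν with hgdef
  -- continuity of the kernel
  have contker : Continuous fun z : (Fin d → ℝ) × ((Fin d → ℝ) × (Fin d → ℝ)) =>
      ee (-(dotR z.1 z.2.1)) * ee (dotR z.1 z.2.2) := by
    have cdot1 : Continuous fun z : (Fin d → ℝ) × ((Fin d → ℝ) × (Fin d → ℝ)) =>
        dotR z.1 z.2.1 := by
      unfold dotR
      exact continuous_finset_sum _ fun i _ =>
        ((continuous_apply i).comp continuous_fst).mul
          ((continuous_apply i).comp (continuous_fst.comp continuous_snd))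
    have cdot2 : Continuous fun z : (Fin d → ℝ) × ((Fin d → ℝ) × (Fin d → ℝ)) =>
        dotR z.1 z.2.2 := by
      unfold dotR
      exact continuous_finset_sum _ fun i _ =>
        ((continuous_apply i).comp continuous_fst).mul
          ((continuous_apply i).comp (continuous_snd.comp continuous_snd))
    exact ((continuous_ee.comp cdot1.neg).mul (continuous_ee.comp cdot2))
  -- Fubini A integrability
  have intA : Integrable (Function.uncurry fun (ω : Fin d → ℝ)
      (p : (Fin d → ℝ) × (Fin d → ℝ)) => ee (-(dotR ω p.1)) * ee (dotR ω p.2))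
      (σf.prod (ν.prod ν)) := by
    refine Integrable.mono' (integrable_const 1) contker.aestronglyMeasurable ?_
    filter_upwards with z
    rw [Function.uncurry]
    rw [norm_mul, norm_ee, norm_ee]
    norm_num
  -- L² membership of (p,x) ↦ f (φ (pr p) x) on the product
  have hint_sq : Integrable (fun x => ‖f x‖ ^ 2) μ :=
    (memLp_two_iff_integrable_sq_norm hfm.aestronglyMeasurable).mp hf
  have memcomp : ∀ pr : ((Fin d → ℝ) × (Fin d → ℝ)) → (Fin d → ℝ), Measurable pr →
      MemLp (fun z : ((Fin d → ℝ) × (Fin d → ℝ)) × X => f (φ (pr z.1) z.2)) 2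
        ((ν.prod ν).prod μ) := by
    intro pr hpr
    have hmeasA : Measurable fun z : ((Fin d → ℝ) × (Fin d → ℝ)) × X =>
        f (φ (pr z.1) z.2) :=
      hfm.measurable.comp (hφmeas.comp ((hpr.comp measurable_fst).prodMk measurable_snd))
    refine (memLp_two_iff_integrable_sq_norm hmeasA.aestronglyMeasurable).mpr ?_
    refine (integrable_prod_iff ?_).mpr ⟨?_, ?_⟩
    · exact (hmeasA.norm.pow_const 2).aestronglyMeasurable
    · filter_upwards with p
      have : (fun x => ‖f (φ (pr p) x)‖ ^ 2) = (fun x => ‖f x‖ ^ 2) ∘ (φ (pr p)) := rfl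
      rw [this, (hφmp (pr p)).integrable_comp hint_sq.aestronglyMeasurable]
      exact hint_sq
    · have hval : ∀ p : (Fin d → ℝ) × (Fin d → ℝ),
          (∫ x, ‖(fun x => ‖f (φ (pr p) x)‖ ^ 2) x‖ ∂μ) = ∫ x, ‖f x‖ ^ 2 ∂μ := by
        intro p
        have h1 : (fun x => ‖(fun x => ‖f (φ (pr p) x)‖ ^ 2) x‖)
            = fun x => (fun y => ‖f y‖ ^ 2) (φ (pr p) x) := by
          funext x
          simp [abs_of_nonneg (sq_nonneg ‖f (φ (pr p) x)‖)]
        rw [h1, keyR (pr p) (fun y => ‖f y‖ ^ 2)]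
      rw [show (fun p : (Fin d → ℝ) × (Fin d → ℝ) =>
          ∫ x, ‖(fun x => ‖f (φ (pr p) x)‖ ^ 2) x‖ ∂μ)
          = fun _ => ∫ x, ‖f x‖ ^ 2 ∂μ from funext hval]
      exact integrable_const _
  have memA := memcomp Prod.fst measurable_fst
  have memB := memcomp Prod.snd measurable_snd
  -- conjugate of an L² function is L²
  have memBc : MemLp (fun z : ((Fin d → ℝ) × (Fin d → ℝ)) × X =>
      (starRingEnd ℂ) (f (φ z.1.2 z.2))) 2 ((ν.prod ν).prod μ) := by
    refine ⟨?_, ?_⟩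
    · exact (RCLike.continuous_conj.comp_aestronglyMeasurable memB.1)
    · rw [show (fun z : ((Fin d → ℝ) × (Fin d → ℝ)) × X =>
        (starRingEnd ℂ) (f (φ z.1.2 z.2))) = fun z => (starRingEnd ℂ)
        ((fun z : ((Fin d → ℝ) × (Fin d → ℝ)) × X => f (φ z.1.2 z.2)) z) from rfl]
      calc eLpNorm _ 2 _ = eLpNorm (fun z : ((Fin d → ℝ) × (Fin d → ℝ)) × X =>
            f (φ z.1.2 z.2)) 2 ((ν.prod ν).prod μ) := by
            apply eLpNorm_congr_norm_ae
            filter_upwards with z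
            rw [RCLike.norm_conj]
        _ < ⊤ := memB.2
  -- Fubini B integrability
  have intB : Integrable (Function.uncurry fun (p : (Fin d → ℝ) × (Fin d → ℝ)) (x : X) =>
      f (φ p.1 x) * (starRingEnd ℂ) (f (φ p.2 x))) ((ν.prod ν).prod μ) := by
    rw [← memLp_one_iff_integrable]
    have := memBc.smul (p := 2) (q := 2) (r := 1) memA
    convert this using 1
    rfl
  -- Step 1: K ω * conj (K ω) as a double integral
  have c1 : ∀ ω : Fin d → ℝ, K ω * (starRingEnd ℂ) (K ω)
      = ∫ p, ee (-(dotR ω p.1)) * ee (dotR ω p.2) ∂(ν.prod ν) := by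
    intro ω
    rw [integral_prod_mul (f := fun s => ee (-(dotR ω s))) (g := fun t => ee (dotR ω t))]
    congr 1
    rw [← integral_conj]
    congr 1
    funext t
    rw [conj_ee, neg_neg]
  -- Step 2: Fubini A
  have c2 : ∫ ω, (∫ p, ee (-(dotR ω p.1)) * ee (dotR ω p.2) ∂(ν.prod ν)) ∂σf
      = ∫ p, (∫ ω, ee (-(dotR ω p.1)) * ee (dotR ω p.2) ∂σf) ∂(ν.prod ν) :=
    integral_integral_swap intA
  -- Step 3: spectral identity and measure preservation
  have c3 : ∀ p : (Fin d → ℝ) × (Fin d → ℝ),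
      (∫ ω, ee (-(dotR ω p.1)) * ee (dotR ω p.2) ∂σf)
        = ∫ x, f (φ p.1 x) * (starRingEnd ℂ) (f (φ p.2 x)) ∂μ := by
    rintro ⟨s, t⟩
    have h1 : ∀ ω : Fin d → ℝ, ee (-(dotR ω s)) * ee (dotR ω t)
        = ee (-(dotR ω (s - t))) := by
      intro ω
      rw [show -(dotR ω (s - t)) = -(dotR ω s) + dotR ω t by
        simp [dotR, mul_sub, Finset.sum_sub_distrib]; ring, ee_add]
    simp only [h1]
    rw [hspec (s - t)]
    have h2 : ∀ x, φ (s - t) (φ t x) = φ s x := by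
      intro x
      rw [← Function.comp_apply (f := φ (s - t)), ← hφadd, sub_add_cancel]
    calc ∫ x, f (φ (s - t) x) * (starRingEnd ℂ) (f x) ∂μ
        = ∫ x, (fun y => f (φ (s - t) y) * (starRingEnd ℂ) (f y)) (φ t x) ∂μ :=
          (key t _).symm
      _ = ∫ x, f (φ s x) * (starRingEnd ℂ) (f (φ t x)) ∂μ := by
          congr 1
          funext x
          simp only [h2 x]
  -- Step 4: Fubini B
  have c4 : ∫ p, (∫ x, f (φ p.1 x) * (starRingEnd ℂ) (f (φ p.2 x)) ∂μ) ∂(ν.prod ν)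
      = ∫ x, (∫ p, f (φ p.1 x) * (starRingEnd ℂ) (f (φ p.2 x)) ∂(ν.prod ν)) ∂μ :=
    integral_integral_swap intB
  -- Step 5: inner integral factorizes
  have c5 : ∀ x : X, (∫ p, f (φ p.1 x) * (starRingEnd ℂ) (f (φ p.2 x)) ∂(ν.prod ν))
      = g x * (starRingEnd ℂ) (g x) := by
    intro x
    rw [integral_prod_mul (f := fun s => f (φ s x))
      (g := fun t => (starRingEnd ℂ) (f (φ t x)))]
    congr 1
    rw [← integral_conj]
  -- the main complex identity
  have main : ∫ ω, K ω * (starRingEnd ℂ) (K ω) ∂σf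
      = ∫ x, g x * (starRingEnd ℂ) (g x) ∂μ := by
    calc ∫ ω, K ω * (starRingEnd ℂ) (K ω) ∂σf
        = ∫ ω, (∫ p, ee (-(dotR ω p.1)) * ee (dotR ω p.2) ∂(ν.prod ν)) ∂σf := by
          congr 1; funext ω; exact c1 ω
      _ = ∫ p, (∫ ω, ee (-(dotR ω p.1)) * ee (dotR ω p.2) ∂σf) ∂(ν.prod ν) := c2
      _ = ∫ p, (∫ x, f (φ p.1 x) * (starRingEnd ℂ) (f (φ p.2 x)) ∂μ) ∂(ν.prod ν) := by
          congr 1; funext p; exact c3 p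
      _ = ∫ x, (∫ p, f (φ p.1 x) * (starRingEnd ℂ) (f (φ p.2 x)) ∂(ν.prod ν)) ∂μ := c4
      _ = ∫ x, g x * (starRingEnd ℂ) (g x) ∂μ := by
          congr 1; funext x; exact c5 x
  -- real form
  have mainR : ∫ ω, ‖K ω‖ ^ 2 ∂σf = ∫ x, ‖g x‖ ^ 2 ∂μ := by
    have hL : ∫ ω, K ω * (starRingEnd ℂ) (K ω) ∂σf = ((∫ ω, ‖K ω‖ ^ 2 ∂σf : ℝ) : ℂ) := by
      calc ∫ ω, K ω * (starRingEnd ℂ) (K ω) ∂σf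
          = ∫ ω, ((‖K ω‖ ^ 2 : ℝ) : ℂ) ∂σf := by
            congr 1; funext ω; rw [RCLike.mul_conj]; norm_cast
        _ = ((∫ ω, ‖K ω‖ ^ 2 ∂σf : ℝ) : ℂ) := integral_ofReal
    have hR : ∫ x, g x * (starRingEnd ℂ) (g x) ∂μ = ((∫ x, ‖g x‖ ^ 2 ∂μ : ℝ) : ℂ) := by
      calc ∫ x, g x * (starRingEnd ℂ) (g x) ∂μ
          = ∫ x, ((‖g x‖ ^ 2 : ℝ) : ℂ) ∂μ := by
            congr 1; funext x; rw [RCLike.mul_conj]; norm_cast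
        _ = ((∫ x, ‖g x‖ ^ 2 ∂μ : ℝ) : ℂ) := integral_ofReal
    have := main
    rw [hL, hR] at this
    exact_mod_cast this
  -- upper bound
  have hgmeas : AEStronglyMeasurable g μ := by
    have hjoint : StronglyMeasurable fun q : X × (Fin d → ℝ) => f (φ q.2 q.1) :=
      (hfm.measurable.comp (hφmeas.comp
        (measurable_snd.prodMk measurable_fst))).stronglyMeasurable
    exact hjoint.integral_prod_right'.aestronglyMeasurable
  have hgb : ∀ᵐ x ∂μ, ‖g x‖ ≤ C * R ^ α := hdev R hR2
  have hgint : Integrable (fun x => ‖g x‖ ^ 2) μ := by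
    refine Integrable.mono' (integrable_const ((C * R ^ α) ^ 2))
      ((hgmeas.norm.mul hgmeas.norm).congr ?_) ?_
    · filter_upwards with x; simp [sq]
    · filter_upwards [hgb] with x hx
      rw [Real.norm_of_nonneg (sq_nonneg _)]
      exact pow_le_pow_left₀ (norm_nonneg _) hx 2
  have hup : ∫ x, ‖g x‖ ^ 2 ∂μ ≤ (C * R ^ α) ^ 2 := by
    have h1 := integral_mono_ae hgint (integrable_const ((C * R ^ α) ^ 2)) (by
      filter_upwards [hgb] with x hx
      exact pow_le_pow_left₀ (norm_nonneg _) hx 2)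
    simpa using h1
  -- lower bound
  have hKmeas : AEStronglyMeasurable K σf := by
    have hcont : Continuous fun q : (Fin d → ℝ) × (Fin d → ℝ) => ee (-(dotR q.1 q.2)) := by
      have hdd : Continuous fun q : (Fin d → ℝ) × (Fin d → ℝ) => dotR q.1 q.2 := by
        unfold dotR
        exact continuous_finset_sum _ fun i _ =>
          ((continuous_apply i).comp continuous_fst).mul
            ((continuous_apply i).comp continuous_snd)
      exact continuous_ee.comp hdd.neg
    exact hcont.stronglyMeasurable.integral_prod_right'.aestronglyMeasurable
  set V := (ν Set.univ).toReal with hV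
  have hKbd : ∀ ω, ‖K ω‖ ≤ V := by
    intro ω
    have h1 := norm_integral_le_of_norm_le_const (μ := ν) (C := 1)
      (f := fun s => ee (-(dotR ω s))) (by filter_upwards with s; rw [norm_ee])
    simpa [measureReal_def] using h1
  have hKint : Integrable (fun ω => ‖K ω‖ ^ 2) σf := by
    refine Integrable.mono' (integrable_const (V ^ 2))
      ((hKmeas.norm.mul hKmeas.norm).congr ?_) ?_
    · filter_upwards with ω; simp [sq]
    · filter_upwards with ω
      rw [Real.norm_of_nonneg (sq_nonneg _)]
      exact pow_le_pow_left₀ (norm_nonneg _) (hKbd ω) 2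
  have hcube_sub : ∀ ω ∈ cube (0 : Fin d → ℝ) r,
      ((4 * R / Real.pi) ^ d) ^ 2 ≤ ‖K ω‖ ^ 2 := by
    intro ω hω
    have hωi : ∀ i, |ω i| ≤ 1 / (4 * R) := by
      intro i
      have h1 := hω i
      rw [Pi.zero_apply, sub_zero] at h1
      have hrR : r = 1 / (4 * R) := by rw [hRdef]; field_simp
      rwa [← hrR]
    choose v hv1 hv2 using fun i => K1_lower hR0 (hωi i)
    have hKω : K ω = ((∏ i, v i : ℝ) : ℂ) := by
      calc K ω = ∏ i, ∫ t in Set.Icc (-R) R, ee (-(ω i * t)) := K_eq_prod R ω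
        _ = ∏ i, ((v i : ℝ) : ℂ) := Finset.prod_congr rfl fun i _ => hv1 i
        _ = ((∏ i, v i : ℝ) : ℂ) := by push_cast; rfl
    have hprod : (4 * R / Real.pi) ^ d ≤ ∏ i, v i := by
      calc (4 * R / Real.pi) ^ d = ∏ _i : Fin d, (4 * R / Real.pi) := by
            rw [Finset.prod_const, Finset.card_univ, Fintype.card_fin]
        _ ≤ ∏ i, v i :=
            Finset.prod_le_prod (fun i _ => by positivity) (fun i _ => hv2 i)
    have h1 : (4 * R / Real.pi) ^ d ≤ ‖K ω‖ := by
      rw [hKω, Complex.norm_real, Real.norm_eq_abs]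
      exact hprod.trans (le_abs_self _)
    exact pow_le_pow_left₀ (by positivity) h1 2
  have hlow : ((4 * R / Real.pi) ^ d) ^ 2 * (σf (cube 0 r)).toReal
      ≤ ∫ ω, ‖K ω‖ ^ 2 ∂σf := by
    calc ((4 * R / Real.pi) ^ d) ^ 2 * (σf (cube 0 r)).toReal
        ≤ ∫ ω in cube 0 r, ‖K ω‖ ^ 2 ∂σf :=
          setIntegral_ge_of_const_le_real (measurableSet_cube 0 r) (measure_ne_top σf _)
            hcube_sub hKint.integrableOn
      _ ≤ ∫ ω, ‖K ω‖ ^ 2 ∂σf :=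
          setIntegral_le_integral hKint (by filter_upwards with ω; positivity)
  have hfinal : ((4 * R / Real.pi) ^ d) ^ 2 * (σf (cube 0 r)).toReal
      ≤ (C * R ^ α) ^ 2 := by
    refine hlow.trans ?_
    rw [mainR]
    exact hup
  -- arithmetic
  have hD : (0:ℝ) < ((4 * R / Real.pi) ^ d) ^ 2 := by positivity
  have h4r : 4 * r = R⁻¹ := by rw [hRdef]; field_simp
  have hrp : (4 * r) ^ (2 * ((d:ℝ) - α)) = R ^ (2 * α) / (R ^ 2) ^ d := by
    rw [h4r, Real.inv_rpow hR0.le,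
      show (2 * ((d:ℝ) - α)) = 2 * (d:ℝ) - 2 * α by ring,
      Real.rpow_sub hR0, inv_div]
    congr 1
    rw [show (2 * (d:ℝ)) = ((2 * d : ℕ) : ℝ) by push_cast; ring,
      Real.rpow_natCast, pow_mul]
  have e1 : ((4 * R / Real.pi) ^ d) ^ 2 = (16 * R ^ 2 / Real.pi ^ 2) ^ d := by
    rw [← pow_mul, mul_comm d 2, pow_mul]
    congr 1
    field_simp
    ring
  have e2 : (C * R ^ α) ^ 2 = C ^ 2 * R ^ (2 * α) := by
    rw [mul_pow, sq (R ^ α), ← Real.rpow_add hR0,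
      show α + α = 2 * α by ring]
  have hR2ne : ((R:ℝ) ^ 2) ^ d ≠ 0 := by positivity
  have h16ne : (16 * R ^ 2 / Real.pi ^ 2) ^ d ≠ 0 := by positivity
  have e4 : (Real.pi ^ 2 / 16) ^ d * (16 * R ^ 2 / Real.pi ^ 2) ^ d = (R ^ 2) ^ d := by
    rw [← mul_pow]
    congr 1
    field_simp
  have e5 : (Real.pi ^ 2 / 16) ^ d / (R ^ 2) ^ d = 1 / (16 * R ^ 2 / Real.pi ^ 2) ^ d := by
    rw [div_eq_div_iff hR2ne h16ne, one_mul]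
    exact e4
  calc (σf (cube 0 r)).toReal
      ≤ (C * R ^ α) ^ 2 / ((4 * R / Real.pi) ^ d) ^ 2 :=
        (le_div_iff₀ hD).mpr (by rw [mul_comm]; exact hfinal)
    _ = (Real.pi ^ 2 / 16) ^ d * C ^ 2 * (4 * r) ^ (2 * ((d:ℝ) - α)) := by
        rw [e2, e1, hrp]
        calc C ^ 2 * R ^ (2 * α) / (16 * R ^ 2 / Real.pi ^ 2) ^ d
            = C ^ 2 * R ^ (2 * α) * (1 / (16 * R ^ 2 / Real.pi ^ 2) ^ d) := by ring
          _ = C ^ 2 * R ^ (2 * α) * ((Real.pi ^ 2 / 16) ^ d / (R ^ 2) ^ d) := by rw [← e5]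
          _ = (Real.pi ^ 2 / 16) ^ d * C ^ 2 * (R ^ (2 * α) / (R ^ 2) ^ d) := by ring

/-- Let `(X, 𝔅, μ)` be a probability space with a measure-preserving
`ℝ^d`-action `φ`, `f ∈ L²(X,μ)`, and `σ_f` a spectral measure of `f`. Suppose there exist
constants `C > 0` and `0 ≤ α < d` such that `|∫_{C_R} f(φ_s x) ds| ≤ C R^α` for every
`R ≥ 2` and μ-almost every `x ∈ X`. Then for every `0 < r ≤ 1/8`:
`σ_f(C^0_r) ≤ (π²/16)^d C² (4r)^{2(d−α)}`. -/
theorem spectral_measure_origin_bound {d : ℕ}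
    {X : Type*} [MeasurableSpace X] (μ : Measure X) [IsProbabilityMeasure μ]
    (φ : (Fin d → ℝ) → X → X)
    (hφmeas : Measurable fun p : (Fin d → ℝ) × X => φ p.1 p.2)
    (hφ0 : φ 0 = id)
    (hφadd : ∀ s t : Fin d → ℝ, φ (s + t) = φ s ∘ φ t)
    (hφmp : ∀ s : Fin d → ℝ, MeasurePreserving (φ s) μ μ)
    (f : X → ℂ) (hf : MemLp f 2 μ)
    (σf : Measure (Fin d → ℝ)) [IsFiniteMeasure σf]
    (hspec : ∀ s : Fin d → ℝ,
      ∫ ω, ee (-(dotR ω s)) ∂σf = ∫ x, f (φ s x) * (starRingEnd ℂ) (f x) ∂μ)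
    (C α : ℝ) (hC : 0 < C) (hα0 : 0 ≤ α) (hαd : α < d)
    (hdev : ∀ R : ℝ, 2 ≤ R → ∀ᵐ x ∂μ,
      ‖∫ s in cube 0 R, f (φ s x)‖ ≤ C * R ^ α) :
    ∀ r : ℝ, 0 < r → r ≤ 1 / 8 →
      (σf (cube 0 r)).toReal
        ≤ (Real.pi ^ 2 / 16) ^ d * C ^ 2 * (4 * r) ^ (2 * ((d : ℝ) - α)) := by
  set f' : X → ℂ := hf.1.mk f with hf'def
  have hf'm : StronglyMeasurable f' := hf.1.stronglyMeasurable_mk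
  have hff' : f =ᵐ[μ] f' := hf.1.ae_eq_mk
  have hf' : MemLp f' 2 μ := hf.ae_eq hff'
  have hT : ∀ R : ℝ, Measurable fun p : X × (Fin d → ℝ) => φ p.2 p.1 := fun _ =>
    hφmeas.comp (measurable_snd.prodMk measurable_fst)
  have hspec' : ∀ s : Fin d → ℝ,
      ∫ ω, ee (-(dotR ω s)) ∂σf = ∫ x, f' (φ s x) * (starRingEnd ℂ) (f' x) ∂μ := by
    intro s
    rw [hspec s]
    apply integral_congr_ae
    have h1 : (fun x => f (φ s x)) =ᵐ[μ] fun x => f' (φ s x) :=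
      (hφmp s).quasiMeasurePreserving.ae_eq_comp hff'
    have h2 : (fun x => (starRingEnd ℂ) (f x)) =ᵐ[μ] fun x => (starRingEnd ℂ) (f' x) :=
      hff'.fun_comp (starRingEnd ℂ)
    exact h1.mul h2
  have hdev' : ∀ R : ℝ, 2 ≤ R → ∀ᵐ x ∂μ,
      ‖∫ s in cube 0 R, f' (φ s x)‖ ≤ C * R ^ α := by
    intro R hR
    have hac : Measure.map (fun p : X × (Fin d → ℝ) => φ p.2 p.1)
        (μ.prod (volume.restrict (cube 0 R))) ≪ μ := by
      refine Measure.AbsolutelyContinuous.mk fun M hM hM0 => ?_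
      rw [Measure.map_apply (hT R) hM, Measure.prod_apply_symm ((hT R) hM)]
      have hz : ∀ s : Fin d → ℝ,
          μ ((fun x => (x, s)) ⁻¹' ((fun p : X × (Fin d → ℝ) => φ p.2 p.1) ⁻¹' M)) = 0 := by
        intro s
        have : ((fun x => (x, s)) ⁻¹' ((fun p : X × (Fin d → ℝ) => φ p.2 p.1) ⁻¹' M))
            = (φ s) ⁻¹' M := rfl
        have hφs : Measurable (φ s) := hφmeas.comp (measurable_const.prodMk measurable_id)
        rw [this, ← Measure.map_apply hφs hM, (hφmp s).map_eq]
        exact hM0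
      simp only [hz]
      simp
    have heq : (fun p : X × (Fin d → ℝ) => f (φ p.2 p.1))
        =ᵐ[μ.prod (volume.restrict (cube 0 R))] fun p => f' (φ p.2 p.1) :=
      ae_eq_comp' (hT R).aemeasurable hff' hac
    have hae := Measure.ae_ae_of_ae_prod heq
    filter_upwards [hae, hdev R hR] with x hx hdevx
    have : ∫ s in cube 0 R, f' (φ s x) = ∫ s in cube 0 R, f (φ s x) :=
      integral_congr_ae (hx.mono fun s hs => hs.symm)
    rw [this]
    exact hdevx
  exact core μ φ hφmeas hφ0 hφadd hφmp f' hf' hf'm σf hspec' C α hC hα0 hαd hdev'
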